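/- arXiv:1704.00465 — 2 statements merged into one kernel-verified Lean document; each statement's English description precedes it below -/
import Mathlib

section
/- Let G be a finite graph and β > 1 a real number with |E(G)|/|V(G)| ≥ β. Let H be an induced subgraph of G that is minimal by inclusion among nonempty induced subgraphs satisfying |E(H)|/|V(H)| ≥ β. Then every nonempty vertex subset W of H touches at least β|W| edges of H (i.e., the number of edges of H with at least one endpoint in W is at least β|W|). -/
/-- If `H = G[U]` is a minimal-by-inclusion nonempty induced subgraph of `G`
of density at least `β`, then every nonempty `W ⊆ U` touches at least `β|W|` edges of `H`. -/
theorem stmt1 {V : Type*} [Fintype V] (G : SimpleGraph V) (β : ℝ) (hβ : 1 < β)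
    (hG : β * (Fintype.card V : ℝ) ≤ (G.edgeSet.ncard : ℝ))
    (U : Set V) (hU : U.Nonempty)
    (hdens : β * U.ncard ≤ (({e ∈ G.edgeSet | ∀ v ∈ e, v ∈ U}).ncard : ℝ))
    (hmin : ∀ U' : Set V, U'.Nonempty → U' ⊆ U →
      β * U'.ncard ≤ (({e ∈ G.edgeSet | ∀ v ∈ e, v ∈ U'}).ncard : ℝ) → U' = U)
    (W : Set V) (hWU : W ⊆ U) (hW : W.Nonempty) :
    β * W.ncard ≤
      (({e ∈ G.edgeSet | (∀ v ∈ e, v ∈ U) ∧ ∃ v ∈ e, v ∈ W}).ncard : ℝ) := by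
  classical
  set A := {e ∈ G.edgeSet | ∀ v ∈ e, v ∈ U} with hA
  set B := {e ∈ G.edgeSet | ∀ v ∈ e, v ∈ U \ W} with hB
  set C := {e ∈ G.edgeSet | (∀ v ∈ e, v ∈ U) ∧ ∃ v ∈ e, v ∈ W} with hC
  have hsplit : A = B ∪ C := by
    ext e
    simp only [hA, hB, hC, Set.mem_setOf_eq, Set.mem_union, Set.mem_diff]
    constructor
    · rintro ⟨he, hu⟩
      by_cases h : ∃ v ∈ e, v ∈ W
      · exact Or.inr ⟨he, hu, h⟩
      · exact Or.inl ⟨he, fun v hv => ⟨hu v hv, fun hw => h ⟨v, hv, hw⟩⟩⟩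
    · rintro (⟨he, h⟩ | ⟨he, h, _⟩)
      · exact ⟨he, fun v hv => (h v hv).1⟩
      · exact ⟨he, h⟩
  have hdisj : Disjoint B C := by
    rw [Set.disjoint_left]
    rintro e ⟨he, hb⟩ ⟨_, _, v, hv, hvW⟩
    exact (hb v hv).2 hvW
  have hcard : A.ncard = B.ncard + C.ncard := by
    rw [hsplit]; exact Set.ncard_union_eq hdisj (Set.toFinite _) (Set.toFinite _)
  have hBle : (B.ncard : ℝ) ≤ β * (U \ W).ncard := by
    rcases (U \ W).eq_empty_or_nonempty with h | h
    · have hBe : B = ∅ := by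
        ext e
        simp only [hB, Set.mem_setOf_eq, h, Set.mem_empty_iff_false, iff_false, not_and]
        intro _ hall
        exact absurd (hall e.out.1 (Sym2.out_fst_mem e)) (by simp)
      simp [hBe, h]
    · by_contra hcon
      push_neg at hcon
      have heq := hmin (U \ W) h Set.diff_subset (le_of_lt hcon)
      obtain ⟨w, hw⟩ := hW
      have : w ∈ U \ W := by rw [heq]; exact hWU hw
      exact this.2 hw
  have hUcard : U.ncard = (U \ W).ncard + W.ncard := by
    have := Set.ncard_union_eq (Set.disjoint_sdiff_left (s := W) (t := U))
      (Set.toFinite _) (Set.toFinite _)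
    rwa [Set.diff_union_of_subset hWU] at this
  have h1 : (A.ncard : ℝ) = B.ncard + C.ncard := by exact_mod_cast hcard
  have h2 : (U.ncard : ℝ) = (U \ W).ncard + W.ncard := by exact_mod_cast hUcard
  nlinarith [hdens, hBle, h1, h2]
end

section
/- Let c1 > c2 > 1, 0 < α < 1, Δ > 0, and let G be a graph on n vertices satisfying: (1) |E(G)|/|V(G)| ≥ c1; (2) every vertex subset W with |W| ≤ αn spans fewer than c2|W| edges; (3) the maximum degree of G is at most Δ. Then G contains an induced subgraph G* on at least αn vertices such that for every W ⊆ V(G*) with |W| ≤ |V(G*)|/2, the external neighborhood of W in G* has size at least γ|W|, where γ = (c1−c2)/(Δ·⌈log₂(1/α)⌉). -/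
open Set

/-- main theorem: every bounded-degree `(c1,c2,α)`-graph contains an induced
subgraph on at least `αn` vertices which is a `γ`-expander for
`γ = (c1-c2)/(Δ·⌈log₂(1/α)⌉)`. -/
theorem stmt3 {V : Type*} [Fintype V] (G : SimpleGraph V) (n : ℕ)
    (hn : Fintype.card V = n)
    (c1 c2 α Δ : ℝ) (hc2 : 1 < c2) (hc : c2 < c1) (hα0 : 0 < α) (hα1 : α < 1) (hΔ : 0 < Δ)
    (hdens : c1 * n ≤ (G.edgeSet.ncard : ℝ))
    (hsparse : ∀ W : Set V, W.Nonempty → (W.ncard : ℝ) ≤ α * n →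
      (({e ∈ G.edgeSet | ∀ v ∈ e, v ∈ W}).ncard : ℝ) < c2 * W.ncard)
    (hdeg : ∀ v : V, ((G.neighborSet v).ncard : ℝ) ≤ Δ) :
    ∃ Vs : Set V, α * n ≤ (Vs.ncard : ℝ) ∧
      ∀ W ⊆ Vs, (W.ncard : ℝ) ≤ (Vs.ncard : ℝ) / 2 →
        (c1 - c2) / (Δ * (⌈Real.logb 2 (1 / α)⌉₊ : ℝ)) * W.ncard ≤
          (({v ∈ Vs | v ∉ W ∧ ∃ w ∈ W, G.Adj v w}).ncard : ℝ) := by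
  classical
  set t : ℕ := ⌈Real.logb 2 (1 / α)⌉₊ with ht_def
  set γ : ℝ := (c1 - c2) / (Δ * (t : ℝ)) with hγ_def
  have htpos : 0 < t := by
    rw [ht_def]
    exact Nat.ceil_pos.mpr (Real.logb_pos one_lt_two ((lt_div_iff₀ hα0).mpr (by linarith)))
  have htR : (1 : ℝ) ≤ (t : ℝ) := by exact_mod_cast htpos
  have hγpos : 0 < γ := by
    rw [hγ_def]
    exact div_pos (sub_pos.mpr hc) (mul_pos hΔ (by linarith))
  have key : ∀ (N : ℕ) (S : Set V), S.Nonempty → S.ncard ≤ N → ∀ k : ℕ,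
      (S.ncard : ℝ) ≤ 2 ^ k * (α * n) →
      c2 * S.ncard + Δ * γ * k * S.ncard ≤
        (({e ∈ G.edgeSet | ∀ v ∈ e, v ∈ S}).ncard : ℝ) →
      ∃ Vs : Set V, α * n ≤ (Vs.ncard : ℝ) ∧
        ∀ W ⊆ Vs, (W.ncard : ℝ) ≤ (Vs.ncard : ℝ) / 2 →
          γ * W.ncard ≤ (({v ∈ Vs | v ∉ W ∧ ∃ w ∈ W, G.Adj v w}).ncard : ℝ) := by
    intro N
    induction N with
    | zero =>
      intro S hne hcard
      exfalso
      exact hne.ne_empty ((Set.ncard_eq_zero S.toFinite).mp (Nat.le_zero.mp hcard))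
    | succ N ih =>
      intro S hne hcard k hsize hdense
      by_cases hsmall : (S.ncard : ℝ) ≤ α * n
      · exfalso
        have h1 := hsparse S hne hsmall
        have h2 : 0 ≤ Δ * γ * k * S.ncard := by positivity
        linarith
      push_neg at hsmall
      by_cases hexp : ∀ W ⊆ S, (W.ncard : ℝ) ≤ (S.ncard : ℝ) / 2 →
          γ * W.ncard ≤ (({v ∈ S | v ∉ W ∧ ∃ w ∈ W, G.Adj v w}).ncard : ℝ)
      · exact ⟨S, hsmall.le, hexp⟩
      push_neg at hexp
      obtain ⟨W, hWS, hWhalf, hWbad⟩ := hexp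
      have hWne : W.Nonempty := by
        rcases W.eq_empty_or_nonempty with rfl | h
        · exfalso
          simp only [Set.ncard_empty, Nat.cast_zero, mul_zero] at hWbad
          exact absurd hWbad (not_lt.mpr (by positivity))
        · exact h
      obtain ⟨k', rfl⟩ : ∃ k', k = k' + 1 := by
        cases k with
        | zero =>
          exfalso
          rw [pow_zero, one_mul] at hsize
          linarith
        | succ k' => exact ⟨k', rfl⟩
      set B : Set V := S \ W with hB_def
      set Nst : Set V := {v ∈ S | v ∉ W ∧ ∃ w ∈ W, G.Adj v w} with hN_def
      set cross : Set (Sym2 V) := {e ∈ G.edgeSet | ∃ a ∈ W, ∃ b ∈ B, e = s(a, b)}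
        with hcross_def
      -- cardinality split of S
      have hsum : B.ncard + W.ncard = S.ncard := Set.ncard_diff_add_ncard_of_subset hWS
      have hsumR : (B.ncard : ℝ) + W.ncard = S.ncard := by exact_mod_cast hsum
      -- edge split
      have hsplit : ({e ∈ G.edgeSet | ∀ v ∈ e, v ∈ S}).ncard ≤
          ({e ∈ G.edgeSet | ∀ v ∈ e, v ∈ W}).ncard +
          ({e ∈ G.edgeSet | ∀ v ∈ e, v ∈ B}).ncard + cross.ncard := by
        have hsub : {e ∈ G.edgeSet | ∀ v ∈ e, v ∈ S} ⊆
            ({e ∈ G.edgeSet | ∀ v ∈ e, v ∈ W} ∪ {e ∈ G.edgeSet | ∀ v ∈ e, v ∈ B}) ∪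
            cross := by
          rintro e ⟨heE, hin⟩
          induction e with
          | _ x y =>
            have hx : x ∈ S := hin x (Sym2.mem_mk_left x y)
            have hy : y ∈ S := hin y (Sym2.mem_mk_right x y)
            by_cases hxW : x ∈ W <;> by_cases hyW : y ∈ W
            · refine Or.inl (Or.inl ⟨heE, ?_⟩)
              intro v hv
              rcases Sym2.mem_iff.mp hv with rfl | rfl <;> assumption
            · exact Or.inr ⟨heE, x, hxW, y, ⟨hy, hyW⟩, rfl⟩
            · refine Or.inr ⟨heE, y, hyW, x, ⟨hx, hxW⟩, ?_⟩
              rw [Sym2.eq_swap]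
            · refine Or.inl (Or.inr ⟨heE, ?_⟩)
              intro v hv
              rcases Sym2.mem_iff.mp hv with rfl | rfl <;> exact ⟨‹_›, ‹_›⟩
        calc ({e ∈ G.edgeSet | ∀ v ∈ e, v ∈ S}).ncard
            ≤ (({e ∈ G.edgeSet | ∀ v ∈ e, v ∈ W} ∪ {e ∈ G.edgeSet | ∀ v ∈ e, v ∈ B}) ∪
              cross).ncard := Set.ncard_le_ncard hsub (Set.toFinite _)
          _ ≤ ({e ∈ G.edgeSet | ∀ v ∈ e, v ∈ W} ∪ {e ∈ G.edgeSet | ∀ v ∈ e, v ∈ B}).ncard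
              + cross.ncard := Set.ncard_union_le _ _
          _ ≤ _ := by
              have := Set.ncard_union_le {e ∈ G.edgeSet | ∀ v ∈ e, v ∈ W}
                {e ∈ G.edgeSet | ∀ v ∈ e, v ∈ B}
              omega
      -- crossing edges bounded by Δ * |Nst|
      have hcrossb : (cross.ncard : ℝ) ≤ Δ * Nst.ncard := by
        have hsub : cross.toFinset ⊆ Nst.toFinset.biUnion (fun v => G.incidenceFinset v) := by
          intro e he
          rw [Set.mem_toFinset] at he
          obtain ⟨heE, a, haW, b, hbB, rfl⟩ := he
          have hadj : G.Adj a b := heE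
          have hbN : b ∈ Nst := ⟨hbB.1, hbB.2, a, haW, hadj.symm⟩
          refine Finset.mem_biUnion.mpr ⟨b, Set.mem_toFinset.mpr hbN, ?_⟩
          rw [SimpleGraph.mem_incidenceFinset]
          exact ⟨heE, Sym2.mem_mk_right a b⟩
        have h1 : cross.ncard ≤ ∑ v ∈ Nst.toFinset, (G.incidenceFinset v).card := by
          rw [Set.ncard_eq_toFinset_card']
          exact le_trans (Finset.card_le_card hsub) (Finset.card_biUnion_le)
        have h2 : (∑ v ∈ Nst.toFinset, ((G.incidenceFinset v).card : ℝ)) ≤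
            ∑ _v ∈ Nst.toFinset, Δ := by
          refine Finset.sum_le_sum fun v _ => ?_
          rw [SimpleGraph.card_incidenceFinset_eq_degree]
          have := hdeg v
          rw [Set.ncard_eq_toFinset_card'] at this
          simpa [SimpleGraph.degree, SimpleGraph.neighborFinset] using this
        have h3 : (cross.ncard : ℝ) ≤ ∑ v ∈ Nst.toFinset, ((G.incidenceFinset v).card : ℝ) := by
          exact_mod_cast le_trans (Nat.cast_le.mpr h1) (le_of_eq (by push_cast; ring))
        rw [Finset.sum_const, nsmul_eq_mul] at h2
        rw [Set.ncard_eq_toFinset_card' Nst]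
        calc (cross.ncard : ℝ) ≤ _ := h3
          _ ≤ _ := h2
          _ = Δ * Nst.toFinset.card := by ring
      have hcross2 : (cross.ncard : ℝ) ≤ Δ * γ * W.ncard := by
        have : Δ * (Nst.ncard : ℝ) ≤ Δ * (γ * W.ncard) :=
          mul_le_mul_of_nonneg_left hWbad.le hΔ.le
        calc (cross.ncard : ℝ) ≤ Δ * Nst.ncard := hcrossb
          _ ≤ Δ * (γ * W.ncard) := this
          _ = Δ * γ * W.ncard := by ring
      -- positivity facts for sizes
      have hSpos : (0 : ℝ) < S.ncard := lt_of_le_of_lt (by positivity) hsmall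
      have hWpos : (0 : ℝ) < W.ncard := by
        have := hWne.ncard_pos W.toFinite
        exact_mod_cast this
      have hBposR : (0 : ℝ) < B.ncard := by
        have : (B.ncard : ℝ) = S.ncard - W.ncard := by linarith [hsumR]
        rw [this]; linarith
      have hBne : B.Nonempty := by
        rw [← Set.ncard_pos B.toFinite]
        exact_mod_cast hBposR
      have hWcard : W.ncard ≤ N := by
        have : (W.ncard : ℝ) < S.ncard := by linarith
        have h4 : W.ncard < S.ncard := by exact_mod_cast this
        omega
      have hBcard : B.ncard ≤ N := by
        have h4 : B.ncard < S.ncard := by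
          have : (B.ncard : ℝ) < S.ncard := by linarith
          exact_mod_cast this
        omega
      have hpow : (2 : ℝ) ^ (k' + 1) = 2 * 2 ^ k' := by ring
      by_cases hAgood : c2 * W.ncard + Δ * γ * k' * W.ncard ≤
          (({e ∈ G.edgeSet | ∀ v ∈ e, v ∈ W}).ncard : ℝ)
      · -- recurse on W at level k'
        refine ih W hWne hWcard k' ?_ hAgood
        rw [hpow] at hsize
        linarith
      · -- recurse on B at level k'+1
        push_neg at hAgood
        refine ih B hBne hBcard (k' + 1) ?_ ?_
        · linarith
        · have hdense' : c2 * ((W.ncard : ℝ) + B.ncard) +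
              Δ * γ * ((k' : ℝ) + 1) * ((W.ncard : ℝ) + B.ncard) ≤
              (({e ∈ G.edgeSet | ∀ v ∈ e, v ∈ S}).ncard : ℝ) := by
            have hkcast : ((k' + 1 : ℕ) : ℝ) = (k' : ℝ) + 1 := by push_cast; ring
            rw [hkcast] at hdense
            have : (S.ncard : ℝ) = (W.ncard : ℝ) + B.ncard := by linarith
            rw [this] at hdense
            exact hdense
          have hsplitR : (({e ∈ G.edgeSet | ∀ v ∈ e, v ∈ S}).ncard : ℝ) ≤
              (({e ∈ G.edgeSet | ∀ v ∈ e, v ∈ W}).ncard : ℝ) +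
              (({e ∈ G.edgeSet | ∀ v ∈ e, v ∈ B}).ncard : ℝ) + cross.ncard := by
            exact_mod_cast hsplit
          have hkcast : ((k' + 1 : ℕ) : ℝ) = (k' : ℝ) + 1 := by push_cast; ring
          rw [hkcast]
          have hring : Δ * γ * ((k' : ℝ) + 1) * ((W.ncard : ℝ) + B.ncard) =
              Δ * γ * (k' : ℝ) * W.ncard + Δ * γ * W.ncard +
              Δ * γ * ((k' : ℝ) + 1) * B.ncard := by ring
          linarith
  -- apply the key lemma
  rcases isEmpty_or_nonempty V with hV | hV
  · refine ⟨∅, ?_, ?_⟩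
    · have : n = 0 := by rw [← hn]; exact Fintype.card_eq_zero
      simp [this]
    · intro W hW _
      rw [Set.subset_empty_iff] at hW
      subst hW
      simp
  · have huniv : (Set.univ : Set V).ncard = n := by
      rw [Set.ncard_univ, Nat.card_eq_fintype_card, hn]
    have h2t : (1 / α : ℝ) ≤ 2 ^ t := by
      have h1 : Real.logb 2 (1 / α) ≤ (t : ℝ) := Nat.le_ceil _
      have h2 : (2 : ℝ) ^ (Real.logb 2 (1 / α)) ≤ (2 : ℝ) ^ ((t : ℝ)) := by
        exact Real.rpow_le_rpow_of_exponent_le one_le_two h1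
      rw [Real.rpow_logb (by norm_num) (by norm_num) (by positivity)] at h2
      rwa [Real.rpow_natCast] at h2
    refine key n Set.univ Set.univ_nonempty (le_of_eq huniv) t ?_ ?_
    · rw [huniv]
      have : (1 / α) * (α * n) ≤ 2 ^ t * (α * n) := by
        apply mul_le_mul_of_nonneg_right h2t
        positivity
      calc (n : ℝ) = (1 / α) * (α * n) := by field_simp
        _ ≤ _ := this
    · have hedge : {e ∈ G.edgeSet | ∀ v ∈ e, v ∈ (Set.univ : Set V)} = G.edgeSet := by
        ext e; simp
      rw [hedge, huniv]
      have hγt : Δ * γ * (t : ℝ) = c1 - c2 := by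
        rw [hγ_def]
        field_simp
      nlinarith [hdens]
end
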